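/- arXiv:1006.1101 — 6 statements merged into one kernel-verified Lean document; each statement's English description precedes it below -/
import Mathlib

section
/- In the space of triples of vectors in R^3 with the Poisson bracket determined by {x_i,y_i}=z_i, {y_i,z_i}=x_i, {z_i,x_i}=y_i on each copy (and coordinates of different copies Poisson-commuting), the Hamiltonians Δ_{ij} = x_i x_j + y_i y_j + z_i z_j satisfy the Kohno relations: {Δ_{ij}, Δ_{kl}} = 0 when i,j,k,l are pairwise distinct, and {Δ_{ij}, Δ_{ik} + Δ_{jk}} = 0 for distinct i,j,k. -/
open scoped BigOperators

namespace Stmt0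

variable (n : ℕ)

/-- The phase space: `n` copies of `ℝ³`, a point assigns to each index `i : Fin n`
a vector `p i : Fin 3 → ℝ` with coordinates `x_i = p i 0`, `y_i = p i 1`, `z_i = p i 2`. -/
abbrev V (n : ℕ) := Fin n → Fin 3 → ℝ

/-- Standard basis vector of `V n` at position `(i, a)`. -/
def e (i : Fin n) (a : Fin 3) : V n := fun j b => if j = i ∧ b = a then 1 else 0

/-- Partial derivative of a function along the coordinate `(i, a)`. -/
noncomputable def D (i : Fin n) (a : Fin 3) (f : V n → ℝ) (p : V n) : ℝ :=
  fderiv ℝ f p (e n i a)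

/-- The Poisson bracket on smooth functions on `(ℝ³)^n` determined by
`{x_i, y_i} = z_i`, `{y_i, z_i} = x_i`, `{z_i, x_i} = y_i` on each copy,
coordinates of different copies commuting. -/
noncomputable def bracket (f g : V n → ℝ) (p : V n) : ℝ :=
  ∑ i : Fin n,
    (p i 2 * (D n i 0 f p * D n i 1 g p - D n i 1 f p * D n i 0 g p)
   + p i 0 * (D n i 1 f p * D n i 2 g p - D n i 2 f p * D n i 1 g p)
   + p i 1 * (D n i 2 f p * D n i 0 g p - D n i 0 f p * D n i 2 g p))

/-- The Hamiltonian `Δ_{ij} = ⟨r_i, r_j⟩ = x_i x_j + y_i y_j + z_i z_j`. -/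
def Δ (i j : Fin n) (p : V n) : ℝ := ∑ a : Fin 3, p i a * p j a

/-!
In terms of the coordinate gradients `∇ₘ`, the bracket is `{f, g} = ∑ₘ rₘ · (∇ₘ f × ∇ₘ g)`, and
`∇ₘ Δᵢⱼ = δₘᵢ rⱼ + δₘⱼ rᵢ`. Hence `{Δᵢⱼ, Δₖₗ}` is a sum of four triple products, one for each
coincidence `i = k`, `i = l`, `j = k`, `j = l`. For disjoint pairs none survives; for
`{Δᵢⱼ, Δᵢₖ + Δⱼₖ}` the two survivors `[rᵢ, rⱼ, rₖ]` and `[rⱼ, rᵢ, rₖ]` cancel, and every other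
term has a repeated vector.
-/

open scoped Matrix

theorem sum_dotProduct_cross_ite {ι R : Type*} [Fintype ι] [DecidableEq ι] [CommRing R]
    (p : ι → Fin 3 → R) (a b : ι) (u v : Fin 3 → R) :
    ∑ m, p m ⬝ᵥ ((if m = a then u else 0) ⨯₃ (if m = b then v else 0)) =
      if a = b then p a ⬝ᵥ (u ⨯₃ v) else 0 := by
  rw [Finset.sum_eq_single a (fun m _ hm => by simp [hm]) (by simp)]
  rcases eq_or_ne a b with rfl | hab <;> simp [*]

theorem fderiv_apply_apply (c : Fin n) (b : Fin 3) (p v : V n) :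
    fderiv ℝ (fun q : V n => q c b) p v = v c b := by
  rw [fderiv_apply (by fun_prop), fderiv_apply (by fun_prop), fderiv_fun_id]
  rfl

theorem fderiv_Δ_apply (i j : Fin n) (p v : V n) :
    fderiv ℝ (Δ n i j) p v = p i ⬝ᵥ v j + p j ⬝ᵥ v i := by
  unfold Δ
  rw [fderiv_fun_sum fun b _ => by fun_prop]
  simp only [dotProduct, ← Finset.sum_add_distrib, FunLike.coe_sum, Finset.sum_apply]
  refine Finset.sum_congr rfl fun b _ => ?_
  rw [fderiv_fun_mul (by fun_prop) (by fun_prop)]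
  simp [fderiv_apply_apply]

theorem differentiable_Δ (i j : Fin n) : Differentiable ℝ (Δ n i j) := by
  unfold Δ; fun_prop

theorem e_apply (m c : Fin n) (a : Fin 3) :
    e n m a c = if m = c then Pi.single a 1 else 0 := by
  ext b
  by_cases hc : m = c <;> simp [e, hc, Ne.symm, Pi.single_apply]

noncomputable def grad (m : Fin n) (f : V n → ℝ) (p : V n) : Fin 3 → ℝ :=
  fun a => D n m a f p

theorem bracket_eq_sum_dotProduct_cross (f g : V n → ℝ) (p : V n) :
    bracket n f g p = ∑ m, p m ⬝ᵥ (grad n m f p ⨯₃ grad n m g p) := by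
  refine Finset.sum_congr rfl fun m _ => ?_
  simp [grad, cross_apply, dotProduct, Fin.sum_univ_three]
  ring

theorem grad_add {f g : V n → ℝ} {p : V n} (hf : DifferentiableAt ℝ f p)
    (hg : DifferentiableAt ℝ g p) (m : Fin n) :
    grad n m (fun q => f q + g q) p = grad n m f p + grad n m g p := by
  ext a
  simp [grad, D, fderiv_fun_add hf hg]

theorem bracket_add_right (f : V n → ℝ) {g h : V n → ℝ} {p : V n}
    (hg : DifferentiableAt ℝ g p) (hh : DifferentiableAt ℝ h p) :
    bracket n f (fun q => g q + h q) p = bracket n f g p + bracket n f h p := by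
  simp only [bracket_eq_sum_dotProduct_cross, grad_add n hg hh, map_add, dotProduct_add,
    Finset.sum_add_distrib]

theorem grad_Δ (m i j : Fin n) (p : V n) :
    grad n m (Δ n i j) p = (if m = i then p j else 0) + (if m = j then p i else 0) := by
  ext a
  simp only [grad, D, fderiv_Δ_apply, e_apply]
  split_ifs <;> simp [add_comm]

theorem bracket_Δ_Δ (i j k l : Fin n) (p : V n) :
    bracket n (Δ n i j) (Δ n k l) p =
      (if i = k then p i ⬝ᵥ (p j ⨯₃ p l) else 0) + (if i = l then p i ⬝ᵥ (p j ⨯₃ p k) else 0) +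
      (if j = k then p j ⬝ᵥ (p i ⨯₃ p l) else 0) + (if j = l then p j ⬝ᵥ (p i ⨯₃ p k) else 0) := by
  simp only [bracket_eq_sum_dotProduct_cross, grad_Δ, map_add, LinearMap.add_apply,
    dotProduct_add, Finset.sum_add_distrib, sum_dotProduct_cross_ite]
  abel

theorem klyachko_hamiltonians_satisfy_kohno_relations
    (i j k l : Fin n)
    (hik : i ≠ k) (hil : i ≠ l) (hjk : j ≠ k) (hjl : j ≠ l) :
    (∀ p : V n, bracket n (Δ n i j) (Δ n k l) p = 0) ∧
    (∀ p : V n, bracket n (Δ n i j) (fun q => Δ n i k q + Δ n j k q) p = 0) := by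
  refine ⟨fun p => by simp [bracket_Δ_Δ, hik, hil, hjk, hjl], fun p => ?_⟩
  rw [bracket_add_right n _ (differentiable_Δ n i k p) (differentiable_Δ n j k p),
    bracket_Δ_Δ, bracket_Δ_Δ]
  rcases eq_or_ne i j with rfl | hij
  · simp [dot_self_cross]
  · simp only [hij, hij.symm, cross_self, dot_cross_self, dotProduct_zero, if_true, if_false,
      ite_self, add_zero, zero_add]
    rw [triple_product_permutation (p j), ← cross_anticomm, dotProduct_neg, neg_add_cancel]

end Stmt0
end

section
/- Let g be a semisimple (or more generally, a Lie algebra with an invariant symmetric bilinear form) Lie algebra with orthonormal basis e_α, and consider the universal enveloping algebra U(g ⊕ ... ⊕ g) of n copies of g, with e_α^j denoting the basis element e_α in the j-th copy. Then the mixed Casimirs Δ_{ij} = Σ_α e_α^i e_α^j satisfy the Kohno relations: [Δ_{ij}, Δ_{kl}] = 0 if i,j,k,l are pairwise distinct, and [Δ_{ij}, Δ_{ik} + Δ_{jk}] = 0 for distinct i,j,k. -/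
open scoped BigOperators DirectSum

namespace Stmt1

variable {K : Type*} [Field K] [CharZero K]
variable {L : Type*} [LieRing L] [LieAlgebra K L]

/-- `n` copies of the Lie algebra `L`, as a direct sum. -/
abbrev nCopies (L : Type*) [LieRing L] [LieAlgebra K L] (n : ℕ) : Type _ :=
  ⨁ _j : Fin n, L

/-- The image `e_α^j` in the universal enveloping algebra of `n` copies of `L` of the basis
element `e α` placed in the `j`-th copy. -/
noncomputable def gen (n : ℕ) {m : ℕ} (e : Module.Basis (Fin m) K L) (j : Fin n) (α : Fin m) :
    UniversalEnvelopingAlgebra K (nCopies (K := K) L n) :=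
  UniversalEnvelopingAlgebra.ι K (DirectSum.lieAlgebraOf K (Fin n) (fun _ => L) j (e α))

/-- The mixed Casimir `Δ_{ij} = Σ_α e_α^i e_α^j`. -/
noncomputable def Δ (n : ℕ) {m : ℕ} (e : Module.Basis (Fin m) K L) (i j : Fin n) :
    UniversalEnvelopingAlgebra K (nCopies (K := K) L n) :=
  ∑ α : Fin m, gen n e i α * gen n e j α

/-!
Different copies of `L` commute in `U(L^{⊕n})`, so every factor of `Δ_{ij}` commutes with every
factor of `Δ_{kl}`. For the second relation write `Δ_{ik} + Δ_{jk} = ∑ β, (e_β^i + e_β^j) e_β^k`: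
the `e_β^k` commute with `Δ_{ij}`, and so do the diagonal elements `x^i + x^j`, because the
Casimir tensor `∑ α, e_α ⊗ e_α` is invariant under the adjoint action.
-/

attribute [local instance 100] LieRing.ofAssociativeRing

section BilinForm

variable {R : Type*} [CommRing R] [LieAlgebra R L] {ι : Type*} [Fintype ι] [DecidableEq ι]

theorem lieInvariant_of_associative (B : LinearMap.BilinForm R L)
    (hB : ∀ x y z : L, B ⁅x, y⁆ z = B x ⁅y, z⁆) : B.lieInvariant L := fun x y z => by
  rw [← hB, ← lie_skew, map_neg, LinearMap.neg_apply]

theorem basis_repr_eq_of_orthonormal {B : LinearMap.BilinForm R L} {e : Module.Basis ι R L}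
    (he : ∀ α β, B (e α) (e β) = if α = β then 1 else 0) (x : L) (γ : ι) :
    e.repr x γ = B x (e γ) := by
  conv_rhs => rw [← e.sum_repr x]
  simp only [map_sum, map_smul, LinearMap.sum_apply, LinearMap.smul_apply, he, smul_eq_mul]
  simp

/-- Invariance of the Casimir tensor `∑ α, e α ⊗ e α`, tested against an arbitrary bilinear map:
`ad x` has a skew-symmetric matrix in an orthonormal basis. -/
theorem sum_apply_lie_basis_add_apply_basis_lie_eq_zero {M : Type*} [AddCommGroup M] [Module R M]
    {B : LinearMap.BilinForm R L} (hB : B.lieInvariant L) (hsymm : ∀ x y, B x y = B y x)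
    {e : Module.Basis ι R L} (he : ∀ α β, B (e α) (e β) = if α = β then 1 else 0)
    (Φ : L →ₗ[R] L →ₗ[R] M) (x : L) :
    ∑ α, (Φ ⁅x, e α⁆ (e α) + Φ (e α) ⁅x, e α⁆) = 0 := by
  set c : ι → ι → R := fun α γ => e.repr ⁅x, e α⁆ γ
  have hc : ∀ α γ, c γ α = -c α γ := fun α γ => by
    simp only [c, basis_repr_eq_of_orthonormal he, hB x, hsymm (e γ)]
  have hexp : ∀ α, ⁅x, e α⁆ = ∑ γ, c α γ • e γ := fun α => (e.sum_repr _).symm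
  simp only [hexp, map_sum, map_smul, LinearMap.sum_apply, LinearMap.smul_apply,
    Finset.sum_add_distrib]
  conv_lhs => arg 2; rw [Finset.sum_comm]
  rw [← Finset.sum_add_distrib]
  refine Finset.sum_eq_zero fun α _ => ?_
  rw [← Finset.sum_add_distrib]
  exact Finset.sum_eq_zero fun γ _ => by rw [hc, neg_smul, neg_add_cancel]

end BilinForm

section MixedCasimir

variable {R : Type*} [CommRing R] [LieAlgebra R L] {ι : Type*} [Fintype ι]
  {A : Type*} [Ring A] [Algebra R A]

theorem lie_add_mul_of_commute {u₁ u₂ v w : A} (h₁ : Commute u₁ w) (h₂ : Commute u₂ v) :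
    ⁅u₁ + u₂, v * w⁆ = ⁅u₁, v⁆ * w + v * ⁅u₂, w⁆ := by
  simp only [LieRing.of_associative_ring_bracket, add_mul, mul_add, mul_sub, sub_mul, ← mul_assoc,
    h₂.eq]
  rw [mul_assoc v u₁, h₁.eq, ← mul_assoc]
  abel

noncomputable def mixedCasimir (e : Module.Basis ι R L) (f g : L →ₗ⁅R⁆ A) : A :=
  ∑ α, f (e α) * g (e α)

theorem commute_mixedCasimir (e : Module.Basis ι R L) {f g h : L →ₗ⁅R⁆ A}
    (hf : ∀ x y, Commute (f x) (h y)) (hg : ∀ x y, Commute (g x) (h y)) (y : L) :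
    Commute (mixedCasimir e f g) (h y) :=
  Commute.sum_left _ _ _ fun _ _ => (hf _ y).mul_left (hg _ y)

theorem mixedCasimir_commute_mixedCasimir (e : Module.Basis ι R L) {f g h k : L →ₗ⁅R⁆ A}
    (hfh : ∀ x y, Commute (f x) (h y)) (hgh : ∀ x y, Commute (g x) (h y))
    (hfk : ∀ x y, Commute (f x) (k y)) (hgk : ∀ x y, Commute (g x) (k y)) :
    Commute (mixedCasimir e f g) (mixedCasimir e h k) :=
  Commute.sum_right _ _ _ fun _ _ =>
    (commute_mixedCasimir e hfh hgh _).mul_right (commute_mixedCasimir e hfk hgk _)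

theorem lie_add_mixedCasimir [DecidableEq ι] {B : LinearMap.BilinForm R L} (hB : B.lieInvariant L)
    (hsymm : ∀ x y, B x y = B y x) {e : Module.Basis ι R L}
    (he : ∀ α β, B (e α) (e β) = if α = β then 1 else 0) {f g : L →ₗ⁅R⁆ A}
    (hfg : ∀ x y, Commute (f x) (g y)) (x : L) :
    ⁅f x + g x, mixedCasimir e f g⁆ = 0 := by
  have hterm : ∀ a b, ⁅f x + g x, f a * g b⁆ = f ⁅x, a⁆ * g b + f a * g ⁅x, b⁆ := fun a b => by
    rw [lie_add_mul_of_commute (hfg x b) (hfg a x).symm, LieHom.map_lie, LieHom.map_lie]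
  simp only [mixedCasimir, lie_sum, hterm]
  exact sum_apply_lie_basis_add_apply_basis_lie_eq_zero hB hsymm he
    ((LinearMap.mul R A).compl₁₂ f.toLinearMap g.toLinearMap) x

theorem mixedCasimir_commute_add_mixedCasimir [DecidableEq ι] {B : LinearMap.BilinForm R L}
    (hB : B.lieInvariant L) (hsymm : ∀ x y, B x y = B y x) {e : Module.Basis ι R L}
    (he : ∀ α β, B (e α) (e β) = if α = β then 1 else 0) {f g h : L →ₗ⁅R⁆ A}
    (hfg : ∀ x y, Commute (f x) (g y)) (hfh : ∀ x y, Commute (f x) (h y))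
    (hgh : ∀ x y, Commute (g x) (h y)) :
    Commute (mixedCasimir e f g) (mixedCasimir e f h + mixedCasimir e g h) := by
  unfold mixedCasimir
  rw [← Finset.sum_add_distrib]
  refine Commute.sum_right _ _ _ fun β _ => ?_
  rw [← add_mul]
  refine Commute.mul_right ?_ (commute_mixedCasimir e hfh hgh _)
  exact (commute_iff_lie_eq.mpr (lie_add_mixedCasimir hB hsymm he hfg (e β))).symm

end MixedCasimir

theorem commute_map_lieAlgebraOf_of_ne {R : Type*} [CommRing R] {A : Type*} [Ring A]
    [Algebra R A] {ι : Type*} [DecidableEq ι] {𝔤 : ι → Type*} [∀ i, LieRing (𝔤 i)]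
    [∀ i, LieAlgebra R (𝔤 i)] (φ : (⨁ i, 𝔤 i) →ₗ⁅R⁆ A) {i j : ι} (hij : i ≠ j)
    (x : 𝔤 i) (y : 𝔤 j) :
    Commute (φ (DirectSum.lieAlgebraOf R ι 𝔤 i x)) (φ (DirectSum.lieAlgebraOf R ι 𝔤 j y)) := by
  rw [commute_iff_lie_eq, ← LieHom.map_lie]
  exact (congrArg φ (DirectSum.lie_of_of_ne 𝔤 hij x y)).trans φ.map_zero

theorem mixed_casimirs_satisfy_kohno_relations_general
    (n m : ℕ) (e : Module.Basis (Fin m) K L) (B : LinearMap.BilinForm K L)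
    (hsymm : ∀ x y : L, B x y = B y x)
    (hinv : ∀ x y z : L, B ⁅x, y⁆ z = B x ⁅y, z⁆)
    (horth : ∀ α β : Fin m, B (e α) (e β) = if α = β then 1 else 0)
    (i j k l : Fin n)
    (hij : i ≠ j) (hik : i ≠ k) (hil : i ≠ l) (hjk : j ≠ k) (hjl : j ≠ l) :
    Δ n e i j * Δ n e k l - Δ n e k l * Δ n e i j = 0 ∧
    Δ n e i j * (Δ n e i k + Δ n e j k) - (Δ n e i k + Δ n e j k) * Δ n e i j = 0 := by
  let copy (p : Fin n) : L →ₗ⁅K⁆ UniversalEnvelopingAlgebra K (nCopies (K := K) L n) :=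
    (UniversalEnvelopingAlgebra.ι K).comp (DirectSum.lieAlgebraOf K (Fin n) (fun _ => L) p)
  have hcopy {p q : Fin n} (hpq : p ≠ q) (x y : L) : Commute (copy p x) (copy q y) :=
    commute_map_lieAlgebraOf_of_ne (𝔤 := fun _ => L) (UniversalEnvelopingAlgebra.ι K) hpq x y
  have hΔ (p q : Fin n) : Δ n e p q = mixedCasimir e (copy p) (copy q) := rfl
  simp only [hΔ, sub_eq_zero]
  exact ⟨(mixedCasimir_commute_mixedCasimir e (hcopy hik) (hcopy hjk) (hcopy hil)
      (hcopy hjl)).eq,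
    (mixedCasimir_commute_add_mixedCasimir (lieInvariant_of_associative B hinv) hsymm
      horth (hcopy hij) (hcopy hik) (hcopy hjk)).eq⟩

/-- Let `L` be a Lie algebra with an invariant symmetric bilinear form `B` and an orthonormal
basis `e`.  In the universal enveloping algebra of the direct sum of `n` copies of `L`, the
mixed Casimirs `Δ_{ij} = Σ_α e_α^i e_α^j` satisfy the Kohno relations:
`[Δ_{ij}, Δ_{kl}] = 0` if `i, j, k, l` are pairwise distinct, and
`[Δ_{ij}, Δ_{ik} + Δ_{jk}] = 0` for distinct `i, j, k`. -/
theorem mixed_casimirs_satisfy_kohno_relations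
    (n m : ℕ) (e : Module.Basis (Fin m) K L) (B : LinearMap.BilinForm K L)
    (hsymm : ∀ x y : L, B x y = B y x)
    (hinv : ∀ x y z : L, B ⁅x, y⁆ z = B x ⁅y, z⁆)
    (horth : ∀ α β : Fin m, B (e α) (e β) = if α = β then 1 else 0)
    (i j k l : Fin n)
    (hij : i ≠ j) (hik : i ≠ k) (hil : i ≠ l) (hjk : j ≠ k) (hjl : j ≠ l) (hkl : k ≠ l) :
    Δ n e i j * Δ n e k l - Δ n e k l * Δ n e i j = 0 ∧
    Δ n e i j * (Δ n e i k + Δ n e j k) - (Δ n e i k + Δ n e j k) * Δ n e i j = 0 :=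
  mixed_casimirs_satisfy_kohno_relations_general n m e B hsymm hinv horth i j k l hij hik hil hjk
    hjl

end Stmt1
end

section
/- On gl(n)^* with its canonical Lie–Poisson structure (coordinates x_{ij} given by matrix entries, with {x_{ij}, x_{kl}} = δ_{jk} x_{il} − δ_{li} x_{kj}), the functions Δ_{ij} = 2 x_{ij} x_{ji} satisfy the Kohno relations: {Δ_{ij}, Δ_{kl}} = 0 for pairwise distinct i,j,k,l, and {Δ_{ij}, Δ_{ik} + Δ_{jk}} = 0 for distinct i,j,k. -/
open scoped BigOperators

namespace Stmt2

variable (n : ℕ)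

/-- Polynomial functions on `gl(n)^*`: polynomials in the matrix entries `x_{ij}`. -/
abbrev P (n : ℕ) := MvPolynomial (Fin n × Fin n) ℝ

/-- The matrix-entry coordinate function `x_{ij}`. -/
noncomputable def x (i j : Fin n) : P n := MvPolynomial.X (i, j)

/-- The canonical Lie–Poisson bracket on polynomial functions on `gl(n)^*`, determined by
`{x_{ij}, x_{kl}} = δ_{jk} x_{il} − δ_{li} x_{kj}` and the Leibniz rule:
`{f, g} = Σ {x_{ij}, x_{kl}} (∂f/∂x_{ij}) (∂g/∂x_{kl})`. -/
noncomputable def bracket (f g : P n) : P n :=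
  ∑ i : Fin n, ∑ j : Fin n, ∑ k : Fin n, ∑ l : Fin n,
    ((if j = k then x n i l else 0) - (if l = i then x n k j else 0))
      * MvPolynomial.pderiv (i, j) f * MvPolynomial.pderiv (k, l) g

/-- The Hamiltonian `Δ_{ij} = 2 x_{ij} x_{ji}`. -/
noncomputable def Δ (i j : Fin n) : P n := 2 * x n i j * x n j i

/-!
The bracket is a biderivation, so brackets of the quadratic functions `Δ` reduce to brackets of
coordinates. For disjoint index pairs these all vanish. For a shared index,
`{Δ_ab, Δ_ac} = 4 (x_ab x_bc x_ca - x_ba x_ac x_cb)`, which changes sign under `a ↔ b`; since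
`Δ_ab = Δ_ba`, this gives `{Δ_ij, Δ_jk} = -{Δ_ij, Δ_ik}`.
-/

open MvPolynomial

lemma bracket_add_right (f g h : P n) :
    bracket n f (g + h) = bracket n f g + bracket n f h := by
  simp only [bracket, map_add, mul_add, Finset.sum_add_distrib]

lemma bracket_mul_left (f g h : P n) :
    bracket n (f * g) h = f * bracket n g h + g * bracket n f h := by
  simp only [bracket, pderiv_mul, Finset.mul_sum, ← Finset.sum_add_distrib]
  iterate 4 refine Finset.sum_congr rfl fun _ _ => ?_
  ring

lemma bracket_mul_right (f g h : P n) :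
    bracket n f (g * h) = g * bracket n f h + h * bracket n f g := by
  simp only [bracket, pderiv_mul, Finset.mul_sum, ← Finset.sum_add_distrib]
  iterate 4 refine Finset.sum_congr rfl fun _ _ => ?_
  ring

lemma bracket_C_left (c : ℝ) (g : P n) : bracket n (C c) g = 0 := by
  simp [bracket]

lemma bracket_C_right (c : ℝ) (f : P n) : bracket n f (C c) = 0 := by
  simp [bracket]

lemma bracket_ofNat_left (m : ℕ) [m.AtLeastTwo] (g : P n) :
    bracket n (no_index (OfNat.ofNat m)) g = 0 := by
  rw [← map_ofNat C m, bracket_C_left]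

lemma bracket_ofNat_right (m : ℕ) [m.AtLeastTwo] (f : P n) :
    bracket n f (no_index (OfNat.ofNat m)) = 0 := by
  rw [← map_ofNat C m, bracket_C_right]

lemma bracket_x_x (a b c d : Fin n) :
    bracket n (x n a b) (x n c d) =
      (if b = c then x n a d else 0) - (if d = a then x n c b else 0) := by
  simp only [bracket, x, pderiv_X, Pi.single_apply, Prod.mk.injEq]
  simp [ite_and, mul_ite]

lemma Δ_comm (a b : Fin n) : Δ n a b = Δ n b a := by
  simp only [Δ]
  ring

lemma bracket_Δ_Δ (a b c d : Fin n) :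
    bracket n (Δ n a b) (Δ n c d) =
      4 * (x n a b * x n c d * bracket n (x n b a) (x n d c)
        + x n a b * x n d c * bracket n (x n b a) (x n c d)
        + x n b a * x n c d * bracket n (x n a b) (x n d c)
        + x n b a * x n d c * bracket n (x n a b) (x n c d)) := by
  simp only [Δ, bracket_mul_left, bracket_mul_right, bracket_ofNat_left, bracket_ofNat_right]
  ring

lemma bracket_x_x_eq_zero {a b c d : Fin n} (hbc : b ≠ c) (hda : d ≠ a) :
    bracket n (x n a b) (x n c d) = 0 := by
  rw [bracket_x_x, if_neg hbc, if_neg hda, sub_zero]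

lemma bracket_Δ_Δ_eq_zero {a b c d : Fin n} (hac : a ≠ c) (had : a ≠ d) (hbc : b ≠ c)
    (hbd : b ≠ d) : bracket n (Δ n a b) (Δ n c d) = 0 := by
  rw [bracket_Δ_Δ, bracket_x_x_eq_zero n had hbc.symm, bracket_x_x_eq_zero n hac hbd.symm,
    bracket_x_x_eq_zero n hbd hac.symm, bracket_x_x_eq_zero n hbc had.symm]
  ring

lemma bracket_Δ_Δ_of_eq_left {a b c : Fin n} (hab : a ≠ b) (hac : a ≠ c) (hbc : b ≠ c) :
    bracket n (Δ n a b) (Δ n a c) =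
      4 * (x n a b * x n b c * x n c a - x n b a * x n a c * x n c b) := by
  rw [bracket_Δ_Δ]
  simp only [bracket_x_x, ↓reduceIte, if_neg hab, if_neg hab.symm, if_neg hac, if_neg hac.symm,
    if_neg hbc, if_neg hbc.symm]
  ring

theorem gl_hamiltonians_satisfy_kohno_relations
    (i j k l : Fin n)
    (hij : i ≠ j) (hik : i ≠ k) (hil : i ≠ l) (hjk : j ≠ k) (hjl : j ≠ l) :
    bracket n (Δ n i j) (Δ n k l) = 0 ∧
    bracket n (Δ n i j) (Δ n i k + Δ n j k) = 0 := by
  refine ⟨bracket_Δ_Δ_eq_zero n hik hil hjk hjl, ?_⟩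
  rw [bracket_add_right, bracket_Δ_Δ_of_eq_left n hij hik hjk, Δ_comm n i j,
    bracket_Δ_Δ_of_eq_left n hij.symm hjk hik]
  ring

end Stmt2
end

section
/- The second-order differential operators Δ_{kl} = (x_k y_l − x_l y_k)(∂²/∂x_k∂y_l − ∂²/∂x_l∂y_k) on functions of 2n variables (x_1,y_1,...,x_n,y_n) satisfy the Kohno relations: [Δ_{ij}, Δ_{kl}] = 0 when i,j,k,l are pairwise distinct, and [Δ_{ij}, Δ_{ik} + Δ_{jk}] = 0 for distinct i,j,k. -/
open scoped BigOperators

namespace Stmt3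

variable (n : ℕ)

/-- Polynomials in the `2n` variables `x_1, …, x_n, y_1, …, y_n`:
`x_k` is the variable `(k, false)` and `y_k` is the variable `(k, true)`. -/
abbrev P (n : ℕ) := MvPolynomial (Fin n × Bool) ℝ

/-- The algebra of linear operators on polynomials (containing the Weyl algebra). -/
abbrev Op (n : ℕ) := Module.End ℝ (P n)

noncomputable def x (k : Fin n) : P n := MvPolynomial.X (k, false)

noncomputable def y (k : Fin n) : P n := MvPolynomial.X (k, true)

/-- The operator of multiplication by a polynomial. -/
noncomputable def M (p : P n) : Op n := LinearMap.mulLeft ℝ p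

/-- The partial derivative `∂/∂x_k` as a linear operator. -/
noncomputable def Dx (k : Fin n) : Op n := (MvPolynomial.pderiv (k, false)).toLinearMap

/-- The partial derivative `∂/∂y_k` as a linear operator. -/
noncomputable def Dy (k : Fin n) : Op n := (MvPolynomial.pderiv (k, true)).toLinearMap

/-- The second-order differential operator
`Δ_{kl} = (x_k y_l − x_l y_k) (∂²/∂x_k∂y_l − ∂²/∂x_l∂y_k)`. -/
noncomputable def Δ (k l : Fin n) : Op n :=
  M n (x n k * y n l - x n l * y n k) * (Dx n k * Dy n l - Dx n l * Dy n k)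

end Stmt3

/-!
Let `E_ab = x_a ∂/∂x_b + y_a ∂/∂y_b` be the polarization operators; they satisfy the commutation
relations of the elementary matrices of `𝔤𝔩_n`. Capelli's identity writes `Δ_kl` as the column
determinant `(E_kk + 1) E_ll - E_lk E_kl`, so `Δ_kl` lies in the image of `U(𝔤𝔩_{k,l})`.
For disjoint pairs of indices the generators involved commute. For a triple `s = {i, j, k}`,
`2 (Δ_ij + Δ_ik + Δ_jk) = 2 N + N² - C` with `N = ∑_{a ∈ s} E_aa` and `C = ∑_{a,b ∈ s} E_ab E_ba`
the Casimir element of `𝔤𝔩_s`; both are central in `U(𝔤𝔩_s)`, hence commute with `Δ_ij`.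
-/

theorem Ring.lie_mul {R : Type*} [Ring R] (x y z : R) : ⁅x, y * z⁆ = ⁅x, y⁆ * z + y * ⁅x, z⁆ := by
  simp only [Ring.lie_def]
  noncomm_ring

theorem Ring.lie_sum {R κ : Type*} [Ring R] (x : R) (s : Finset κ) (f : κ → R) :
    ⁅x, ∑ i ∈ s, f i⁆ = ∑ i ∈ s, ⁅x, f i⁆ := by
  simp only [Ring.lie_def, Finset.mul_sum, Finset.sum_mul, Finset.sum_sub_distrib]

section GlRelations

variable {R ι : Type*} [Ring R]

/-- The column determinant of the Capelli matrix `!![E a a + 1, E a b; E b a, E b b]`. -/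
def capelliDet (E : ι → ι → R) (a b : ι) : R := (E a a + 1) * E b b - E b a * E a b

theorem Commute.capelliDet_right {E : ι → ι → R} {x : R} {s : Finset ι}
    (h : ∀ c ∈ s, ∀ d ∈ s, Commute x (E c d)) {a b : ι} (ha : a ∈ s) (hb : b ∈ s) :
    Commute x (capelliDet E a b) :=
  (((h a ha a ha).add_right (Commute.one_right x)).mul_right (h b hb b hb)).sub_right
    ((h b hb a ha).mul_right (h a ha b hb))

variable [DecidableEq ι]

/-- The commutation relations of the elementary matrices of `𝔤𝔩(ι)`. -/
def SatisfiesGlRelations (E : ι → ι → R) : Prop :=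
  ∀ a b c d, ⁅E a b, E c d⁆ = (if b = c then E a d else 0) - (if d = a then E c b else 0)

def casimir (E : ι → ι → R) (s : Finset ι) : R := ∑ a ∈ s, ∑ b ∈ s, E a b * E b a

namespace SatisfiesGlRelations

variable {E : ι → ι → R} (hE : SatisfiesGlRelations E)
include hE

theorem lie_eq (a b c d : ι) :
    ⁅E a b, E c d⁆ = (if b = c then E a d else 0) - (if d = a then E c b else 0) :=
  hE a b c d

theorem commute {a b c d : ι} (hbc : b ≠ c) (hda : d ≠ a) : Commute (E a b) (E c d) := by
  rw [commute_iff_lie_eq, hE.lie_eq, if_neg hbc, if_neg hda, sub_zero]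

theorem commute_diag (a b : ι) : Commute (E a a) (E b b) := by
  rw [commute_iff_lie_eq, hE.lie_eq]
  split_ifs <;> simp_all

theorem mul_swap (a b : ι) : E a b * E b a = E b a * E a b + E a a - E b b := by
  have h := hE.lie_eq a b b a
  simp only [if_true, Ring.lie_def] at h
  rw [add_sub_assoc, ← h]
  abel

theorem commute_sum_diag {s : Finset ι} {c d : ι} (hc : c ∈ s) (hd : d ∈ s) :
    Commute (E c d) (∑ a ∈ s, E a a) := by
  rw [commute_iff_lie_eq, Ring.lie_sum]
  simp only [hE.lie_eq, Finset.sum_sub_distrib, Finset.sum_ite_eq, Finset.sum_ite_eq', hc, hd,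
    if_true, sub_self]

theorem commute_casimir {s : Finset ι} {c d : ι} (hc : c ∈ s) (hd : d ∈ s) :
    Commute (E c d) (casimir E s) := by
  rw [commute_iff_lie_eq, casimir]
  simp only [Ring.lie_sum, Ring.lie_mul, hE.lie_eq, sub_mul, mul_sub, ite_mul, mul_ite, zero_mul,
    mul_zero, Finset.sum_add_distrib, Finset.sum_sub_distrib, Finset.sum_ite_eq,
    Finset.sum_ite_eq', hc, hd, if_true]
  simp [hc, hd]

theorem commute_capelliDet_of_disjoint {i j k l : ι} (hik : i ≠ k) (hil : i ≠ l) (hjk : j ≠ k)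
    (hjl : j ≠ l) : Commute (capelliDet E i j) (capelliDet E k l) := by
  refine Commute.capelliDet_right (s := {k, l}) (fun c hc d hd => ?_) (by simp) (by simp)
  refine (Commute.capelliDet_right (s := {i, j}) (fun a ha b hb => ?_) (by simp) (by simp)).symm
  simp only [Finset.mem_insert, Finset.mem_singleton] at ha hb hc hd
  exact hE.commute (by grind) (by grind)

theorem two_mul_capelliDet_add {i j k : ι} (hij : i ≠ j) (hik : i ≠ k) (hjk : j ≠ k) :
    2 * (capelliDet E i j + capelliDet E i k + capelliDet E j k) =
      2 * (∑ a ∈ {i, j, k}, E a a) + (∑ a ∈ {i, j, k}, E a a) * (∑ a ∈ {i, j, k}, E a a) -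
        casimir E {i, j, k} := by
  simp only [casimir, Finset.sum_insert, Finset.mem_insert, Finset.mem_singleton, hij, hik, hjk,
    Finset.sum_singleton, or_self, not_false_eq_true, capelliDet]
  rw [hE.mul_swap i j, hE.mul_swap i k, hE.mul_swap j k]
  simp only [two_mul, mul_add, add_mul, mul_sub, one_mul, (hE.commute_diag j i).eq,
    (hE.commute_diag k i).eq, (hE.commute_diag k j).eq]
  abel

theorem commute_capelliDet_add_capelliDet (h2 : IsUnit (2 : R)) {i j k : ι} (hij : i ≠ j)
    (hik : i ≠ k) (hjk : j ≠ k) :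
    Commute (capelliDet E i j) (capelliDet E i k + capelliDet E j k) := by
  set s : Finset ι := {i, j, k}
  have hcentral : ∀ c ∈ s, ∀ d ∈ s,
      Commute (2 * (∑ a ∈ s, E a a) + (∑ a ∈ s, E a a) * (∑ a ∈ s, E a a) - casimir E s)
        (E c d) := by
    intro c hc d hd
    have hN := hE.commute_sum_diag hc hd
    exact ((((Commute.ofNat_right _ 2).mul_right hN).add_right (hN.mul_right hN)).sub_right
      (hE.commute_casimir hc hd)).symm
  have htwice : Commute (capelliDet E i j)
      (2 * (capelliDet E i j + capelliDet E i k + capelliDet E j k)) := by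
    rw [hE.two_mul_capelliDet_add hij hik hjk]
    exact (Commute.capelliDet_right hcentral (by simp [s]) (by simp [s])).symm
  have hsum : Commute (capelliDet E i j)
      (capelliDet E i j + capelliDet E i k + capelliDet E j k) := by
    have h := htwice.lie_eq
    rw [Ring.lie_mul, (Commute.ofNat_right _ 2).lie_eq, zero_mul, zero_add] at h
    exact commute_iff_lie_eq.mpr (h2.mul_right_eq_zero.mp h)
  simpa only [add_assoc, add_sub_cancel_left] using hsum.sub_right (Commute.refl _)

end SatisfiesGlRelations

end GlRelations

namespace MvPolynomial

theorem pderiv_pderiv_comm {R σ : Type*} [CommRing R] (i j : σ) (p : MvPolynomial σ R) :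
    pderiv i (pderiv j p) = pderiv j (pderiv i p) := by
  have h : ⁅pderiv i, pderiv j⁆ = (0 : Derivation R (MvPolynomial σ R) _) :=
    derivation_ext fun k => by
      classical
      rw [Derivation.commutator_apply]
      simp only [pderiv_X, Pi.single_apply]
      split_ifs <;> simp
  rw [← sub_eq_zero, ← Derivation.commutator_apply, h, Derivation.zero_apply]

section Polarization

variable {ι κ R : Type*} [CommRing R] [Fintype κ]

noncomputable def polarization (a b : ι) :
    Derivation R (MvPolynomial (ι × κ) R) (MvPolynomial (ι × κ) R) :=
  ∑ t : κ, (X (a, t) : MvPolynomial (ι × κ) R) • pderiv (b, t)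

theorem polarization_apply (a b : ι) (p : MvPolynomial (ι × κ) R) :
    polarization a b p = ∑ t, X (a, t) * pderiv (b, t) p := by
  rw [polarization, ← Derivation.coeFnAddMonoidHom_apply, map_sum, Finset.sum_apply]
  rfl

theorem polarization_X [DecidableEq ι] (a b e : ι) (t : κ) :
    polarization a b (X (e, t) : MvPolynomial (ι × κ) R) = if b = e then X (a, t) else 0 := by
  classical
  by_cases h : b = e
  · subst h
    simp [polarization_apply, pderiv_X, Pi.single_apply]
  · simp [polarization_apply, h, Ne.symm h]

theorem satisfiesGlRelations_polarization [DecidableEq ι] :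
    SatisfiesGlRelations fun a b : ι =>
      ((polarization (κ := κ) a b).toLinearMap : Module.End R (MvPolynomial (ι × κ) R)) := by
  intro a b c d
  have h : ⁅polarization (κ := κ) (R := R) a b, polarization c d⁆ =
      (if b = c then polarization a d else 0) - (if d = a then polarization c b else 0) :=
    derivation_ext fun ((e, t) : ι × κ) => by
      rw [Derivation.commutator_apply, polarization_X, polarization_X]
      split_ifs <;> subst_vars <;> simp_all [polarization_X]
  rw [← Derivation.commutator_coe_linear_map, h]
  split_ifs <;> rfl

end Polarization

end MvPolynomial

namespace Stmt3

open MvPolynomial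

variable (n : ℕ)

theorem Δ_eq_capelliDet {k l : Fin n} (hkl : k ≠ l) :
    Δ n k l = capelliDet (fun a b => (polarization (κ := Bool) (R := ℝ) a b).toLinearMap) k l := by
  refine LinearMap.ext fun p => ?_
  simp only [Δ, capelliDet, M, Dx, Dy, x, y, LinearMap.sub_apply, Module.End.mul_apply,
    LinearMap.add_apply, LinearMap.mulLeft_apply, Derivation.coeFn_coe, Module.End.one_apply,
    polarization_apply, Fintype.sum_bool, map_add, pderiv_mul, pderiv_X, Pi.single_apply,
    Prod.mk.injEq, hkl.symm, and_true, and_false, Bool.false_eq_true, Bool.true_eq_false,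
    if_false, if_true]
  rw [pderiv_pderiv_comm (l, false) (k, true)]
  ring

/-- The operators `Δ_{kl} = (x_k y_l − x_l y_k)(∂²/∂x_k∂y_l − ∂²/∂x_l∂y_k)` satisfy the
Kohno relations: `[Δ_{ij}, Δ_{kl}] = 0` for pairwise distinct `i, j, k, l`, and
`[Δ_{ij}, Δ_{ik} + Δ_{jk}] = 0` for distinct `i, j, k`. -/
theorem differential_operators_satisfy_kohno_relations
    (i j k l : Fin n)
    (hij : i ≠ j) (hik : i ≠ k) (hil : i ≠ l) (hjk : j ≠ k) (hjl : j ≠ l) (hkl : k ≠ l) :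
    Δ n i j * Δ n k l - Δ n k l * Δ n i j = 0 ∧
    Δ n i j * (Δ n i k + Δ n j k) - (Δ n i k + Δ n j k) * Δ n i j = 0 := by
  have hE := satisfiesGlRelations_polarization (ι := Fin n) (κ := Bool) (R := ℝ)
  have h2 : IsUnit (2 : Op n) := by
    simpa only [map_ofNat] using (IsUnit.mk0 (2 : ℝ) two_ne_zero).map (algebraMap ℝ (Op n))
  rw [Δ_eq_capelliDet n hij, Δ_eq_capelliDet n hkl, Δ_eq_capelliDet n hik,
    Δ_eq_capelliDet n hjk]
  exact ⟨(hE.commute_capelliDet_of_disjoint hik hil hjk hjl).lie_eq,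
    (hE.commute_capelliDet_add_capelliDet h2 hij hik hjk).lie_eq⟩

end Stmt3
end

section
/- If the Poincaré series of dimensions of homogeneous components of U(br_n) is Σ_k t^k dim U(br_n)^{[k]} = Π_{j=1}^{n-1} (1−jt)^{−1}, then the dimension of the degree-k homogeneous component of the Kohno Lie algebra br_n is dim br_n^{[k]} = (1/k) Σ_{d|k} μ(d) (Σ_{i=1}^{n-1} i^{k/d}), where μ is the Möbius function. Equivalently (as a purely generating-function statement): if graded vector spaces L^{[k]} satisfy the Poincaré–Birkhoff–Witt product formula Π_k (1−t^k)^{−dim L^{[k]}} = Π_{j=1}^{n-1}(1−jt)^{−1}, then dim L^{[k]} = (1/k) Σ_{d|k} μ(d) Σ_{i=1}^{n-1} i^{k/d}. -/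
/-!
Apply the logarithmic derivative `X f' / f`. It turns the products on both sides into sums, and
its coefficients up to degree `N` only depend on those of `f`. The coefficient of `X ^ m` is
`-∑_{k ∣ m} k d_k` on the left (each `1 - X ^ k` contributing `-k` in the degrees divisible by
`k`) and `-∑_j j ^ m` on the right; Möbius inversion of `∑_{k ∣ m} k d_k = ∑_j j ^ m` gives
the formula.
-/

open PowerSeries

namespace Nat

theorem filter_dvd_Icc_eq_divisors {m N : ℕ} (hm : m ≠ 0) (hmN : m ≤ N) :
    {k ∈ Finset.Icc 1 N | k ∣ m} = m.divisors := by
  ext k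
  simp only [Finset.mem_filter, Finset.mem_Icc, mem_divisors]
  constructor
  · rintro ⟨-, hkm⟩
    exact ⟨hkm, hm⟩
  · rintro ⟨hkm, -⟩
    exact ⟨⟨pos_of_dvd_of_pos hkm (pos_of_ne_zero hm),
      (le_of_dvd (pos_of_ne_zero hm) hkm).trans hmN⟩, hkm⟩

end Nat

namespace PowerSeries

section Euler

variable {R : Type*} [CommSemiring R]

theorem coeff_X_mul_derivative (f : R⟦X⟧) (n : ℕ) :
    coeff n (X * d⁄dX R f) = n * coeff n f := by
  cases n with
  | zero => simp
  | succ n => rw [coeff_succ_X_mul, coeff_derivative, mul_comm, Nat.cast_succ]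

theorem X_pow_dvd_X_mul_derivative {n : ℕ} {f : R⟦X⟧} (h : X ^ n ∣ f) :
    X ^ n ∣ X * d⁄dX R f := by
  rw [X_pow_dvd_iff] at h ⊢
  intro i hi
  rw [coeff_X_mul_derivative, h i hi, mul_zero]

end Euler

variable {K : Type*} [Field K]

noncomputable def xLogDeriv (f : K⟦X⟧) : K⟦X⟧ := X * d⁄dX K f * f⁻¹

theorem xLogDeriv_mul {f g : K⟦X⟧} (hf : constantCoeff f ≠ 0) (hg : constantCoeff g ≠ 0) :
    xLogDeriv (f * g) = xLogDeriv f + xLogDeriv g := by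
  unfold xLogDeriv
  rw [Derivation.leibniz, PowerSeries.mul_inv_rev, smul_eq_mul, smul_eq_mul]
  linear_combination (X * d⁄dX K g * g⁻¹) * PowerSeries.mul_inv_cancel f hf +
    (X * d⁄dX K f * f⁻¹) * PowerSeries.mul_inv_cancel g hg

theorem xLogDeriv_pow {f : K⟦X⟧} (hf : constantCoeff f ≠ 0) (e : ℕ) :
    xLogDeriv (f ^ e) = e • xLogDeriv f := by
  induction e with
  | zero => simp [xLogDeriv]
  | succ e ih =>
    rw [pow_succ, xLogDeriv_mul (by simpa using pow_ne_zero e hf) hf, ih, succ_nsmul]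

theorem xLogDeriv_prod {ι : Type*} (s : Finset ι) {f : ι → K⟦X⟧}
    (hf : ∀ i ∈ s, constantCoeff (f i) ≠ 0) :
    xLogDeriv (∏ i ∈ s, f i) = ∑ i ∈ s, xLogDeriv (f i) := by
  induction s using Finset.cons_induction with
  | empty => simp [xLogDeriv]
  | cons a s ha ih =>
    rw [Finset.forall_mem_cons] at hf
    rw [Finset.prod_cons, Finset.sum_cons, ← ih hf.2,
      xLogDeriv_mul hf.1 (by simpa [map_prod, Finset.prod_ne_zero_iff] using hf.2)]

theorem X_pow_dvd_xLogDeriv_sub {n : ℕ} {f g : K⟦X⟧} (hf : constantCoeff f ≠ 0)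
    (hg : constantCoeff g ≠ 0) (h : X ^ n ∣ f - g) :
    X ^ n ∣ xLogDeriv f - xLogDeriv g := by
  have hsplit : xLogDeriv f - xLogDeriv g =
      (X * d⁄dX K (f - g) * g - X * d⁄dX K g * (f - g)) * (f⁻¹ * g⁻¹) := by
    unfold xLogDeriv
    rw [map_sub]
    linear_combination (X * d⁄dX K g * g⁻¹) * PowerSeries.mul_inv_cancel f hf -
      (X * d⁄dX K f * f⁻¹) * PowerSeries.mul_inv_cancel g hg
  rw [hsplit]
  exact ((X_pow_dvd_X_mul_derivative h).mul_right g |>.sub (h.mul_left _)).mul_right _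

theorem coeff_xLogDeriv_eq_of_coeff_eq {n : ℕ} {f g : K⟦X⟧} (hf : constantCoeff f ≠ 0)
    (hg : constantCoeff g ≠ 0) (h : ∀ i < n, coeff i f = coeff i g) {i : ℕ} (hi : i < n) :
    coeff i (xLogDeriv f) = coeff i (xLogDeriv g) := by
  have hdvd : X ^ n ∣ f - g := X_pow_dvd_iff.2 fun j hj => by rw [map_sub, h j hj, sub_self]
  rw [← sub_eq_zero, ← map_sub]
  exact X_pow_dvd_iff.1 (X_pow_dvd_xLogDeriv_sub hf hg hdvd) i hi

theorem xLogDeriv_eq_of_X_mul_derivative_eq {g : K⟦X⟧} (hg : constantCoeff g ≠ 0) {c : K}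
    (h : X * d⁄dX K g = C c * (g - 1)) : xLogDeriv g = C c * (1 - g⁻¹) := by
  unfold xLogDeriv
  rw [h]
  linear_combination C c * PowerSeries.mul_inv_cancel g hg

theorem inv_one_sub_X_pow {k : ℕ} (hk : k ≠ 0) :
    (1 - X ^ k : K⟦X⟧)⁻¹ = expand k hk (mk 1) := by
  rw [PowerSeries.inv_eq_iff_mul_eq_one (by simp [hk]), ← expand_X k hk,
    ← map_one (expand k hk), ← map_sub, ← map_mul, mk_one_mul_one_sub_eq_one, map_one]

theorem inv_one_sub_C_mul_X (a : K) : (1 - C a * X : K⟦X⟧)⁻¹ = rescale a (mk 1) := by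
  rw [PowerSeries.inv_eq_iff_mul_eq_one (by simp), ← rescale_X, ← map_one (rescale a),
    ← map_sub, ← map_mul, mk_one_mul_one_sub_eq_one, map_one]

theorem X_mul_derivative_one_sub_X_pow (k : ℕ) :
    X * d⁄dX K (1 - X ^ k) = C (k : K) * ((1 - X ^ k) - 1) := by
  rcases Nat.eq_zero_or_pos k with rfl | hk
  · simp
  rw [map_sub, derivative_one, derivative_pow, derivative_X, map_natCast]
  obtain ⟨j, rfl⟩ := Nat.exists_eq_add_of_lt hk
  simp only [zero_add, Nat.add_sub_cancel, pow_succ']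
  ring

theorem X_mul_derivative_one_sub_C_mul_X (a : K) :
    X * d⁄dX K (1 - C a * X) = C 1 * ((1 - C a * X) - 1) := by
  rw [map_sub, derivative_one, Derivation.leibniz, derivative_X, derivative_C, map_one]
  simp only [smul_eq_mul]
  ring

theorem coeff_xLogDeriv_one_sub_X_pow {k m : ℕ} (hk : k ≠ 0) (hm : m ≠ 0) :
    coeff m (xLogDeriv (1 - X ^ k : K⟦X⟧)) = if k ∣ m then -(k : K) else 0 := by
  rw [xLogDeriv_eq_of_X_mul_derivative_eq (by simp [hk]) (X_mul_derivative_one_sub_X_pow k),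
    inv_one_sub_X_pow hk, coeff_C_mul, map_sub, coeff_one, if_neg hm, coeff_expand]
  split_ifs <;> simp

theorem coeff_xLogDeriv_one_sub_C_mul_X (a : K) {m : ℕ} (hm : m ≠ 0) :
    coeff m (xLogDeriv (1 - C a * X)) = -a ^ m := by
  rw [xLogDeriv_eq_of_X_mul_derivative_eq (by simp) (X_mul_derivative_one_sub_C_mul_X a),
    inv_one_sub_C_mul_X, coeff_C_mul, map_sub, coeff_one, if_neg hm, coeff_rescale]
  simp

theorem coeff_xLogDeriv_prod_one_sub_X_pow_pow (e : ℕ → ℕ) {m N : ℕ} (hm : m ≠ 0)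
    (hmN : m ≤ N) :
    coeff m (xLogDeriv (∏ k ∈ Finset.Icc 1 N, (1 - X ^ k : K⟦X⟧) ^ e k)) =
      -∑ k ∈ m.divisors, (k * e k : K) := by
  have hk : ∀ k ∈ Finset.Icc 1 N, k ≠ 0 := fun k hk =>
    Nat.one_le_iff_ne_zero.1 (Finset.mem_Icc.1 hk).1
  rw [xLogDeriv_prod _ fun k hk' => by simp [hk k hk'], map_sum,
    ← Nat.filter_dvd_Icc_eq_divisors hm hmN, Finset.sum_filter, ← Finset.sum_neg_distrib]
  refine Finset.sum_congr rfl fun k hk' => ?_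
  rw [xLogDeriv_pow (by simp [hk k hk']), map_nsmul, coeff_xLogDeriv_one_sub_X_pow (hk k hk') hm]
  split_ifs <;> simp [nsmul_eq_mul, mul_comm]

theorem coeff_xLogDeriv_prod_one_sub_C_mul_X {ι : Type*} (s : Finset ι) (a : ι → K) {m : ℕ}
    (hm : m ≠ 0) :
    coeff m (xLogDeriv (∏ i ∈ s, (1 - C (a i) * X))) = -∑ i ∈ s, a i ^ m := by
  rw [xLogDeriv_prod _ fun i _ => by simp, map_sum, ← Finset.sum_neg_distrib]
  exact Finset.sum_congr rfl fun i _ => coeff_xLogDeriv_one_sub_C_mul_X (a i) hm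

end PowerSeries

namespace Stmt4

theorem sum_divisors_mul_eq_sum_pow (n : ℕ) (d : ℕ → ℕ)
    (hPBW : ∀ N m : ℕ, m ≤ N →
      (PowerSeries.coeff m) (∏ k ∈ Finset.Icc 1 N, (1 - (X : PowerSeries ℚ) ^ k) ^ (d k)) =
      (PowerSeries.coeff m) (∏ j ∈ Finset.Icc 1 (n - 1),
          (1 - PowerSeries.C (j : ℚ) * X)))
    {m : ℕ} (hm : m ≠ 0) :
    ∑ k ∈ m.divisors, (k * d k : ℤ) = ∑ j ∈ Finset.Icc 1 (n - 1), (j : ℤ) ^ m := by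
  have h := coeff_xLogDeriv_eq_of_coeff_eq
    (by simp +contextual [map_prod, Finset.prod_eq_zero_iff, Nat.one_le_iff_ne_zero])
    (by simp [map_prod])
    (fun i hi => hPBW m i (Nat.le_of_lt_succ hi)) (Nat.lt_succ_self m)
  rw [coeff_xLogDeriv_prod_one_sub_X_pow_pow d hm le_rfl,
    coeff_xLogDeriv_prod_one_sub_C_mul_X _ _ hm] at h
  exact_mod_cast neg_injective h

/-- Purely generating-function form of the dimension formula for the homogeneous components of
the Kohno Lie algebra `br_n`: if graded vector spaces `L^{[k]}` (of dimensions `d k`, `k ≥ 1`)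
satisfy the Poincaré–Birkhoff–Witt product formula
`Π_{k≥1} (1 − t^k)^{d k} = Π_{j=1}^{n-1} (1 − j t)`
(equivalently `Π (1−t^k)^{−d k} = Π (1−jt)^{−1}`), encoded coefficientwise via partial
products, then `k · d k = Σ_{e | k} μ(e) Σ_{i=1}^{n-1} i^{k/e}`. -/
theorem dim_of_kohno_algebra_component
    (n : ℕ) (d : ℕ → ℕ)
    (hPBW : ∀ N m : ℕ, m ≤ N →
      (PowerSeries.coeff m) (∏ k ∈ Finset.Icc 1 N, (1 - (X : PowerSeries ℚ) ^ k) ^ (d k)) =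
      (PowerSeries.coeff m) (∏ j ∈ Finset.Icc 1 (n - 1),
          (1 - PowerSeries.C (j : ℚ) * X))) :
    ∀ k : ℕ, 1 ≤ k →
      (k : ℤ) * (d k : ℤ) =
        ∑ e ∈ k.divisors, (ArithmeticFunction.moebius e) *
          ∑ i ∈ Finset.Icc 1 (n - 1), (i : ℤ) ^ (k / e) := by
  intro k hk
  rw [← ArithmeticFunction.sum_eq_iff_sum_mul_moebius_eq.1
    (fun m hm => sum_divisors_mul_eq_sum_pow n d hPBW hm.ne') k hk]
  exact Nat.sum_divisorsAntidiagonal fun e f =>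
    (ArithmeticFunction.moebius e : ℤ) * ∑ i ∈ Finset.Icc 1 (n - 1), (i : ℤ) ^ f

end Stmt4
end

section
/- For a > 0, let U_a^!(g) be the set of z ∈ Ū(g) with [[z]]_a := sup_p ‖z^{[p]}‖ p! a^{−p} < ∞. If z ∈ U_a^!(g) and u ∈ U_b^!(g), then zu ∈ U_{a+b}^!(g) with [[zu]]_{a+b} ≤ [[z]]_a · [[u]]_b. Consequently U^!(g) := ∪_a U_a^!(g) is an algebra. -/
/-!
Write `‖z p‖ ≤ La · a^p/p!` and `‖u q‖ ≤ Lb · b^q/q!`. Bounding the `r`-th component of `zu`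
termwise, the binomial theorem in the form `∑_{p+q=r} a^p/p! · b^q/q! = (a+b)^r/r!` gives
`‖(zu) r‖ ≤ La · Lb · (a+b)^r/r!`.
-/

open scoped BigOperators

namespace Stmt16

variable {A : Type*} [NormedRing A]

/-- Convolution (the product of the completed graded algebra `Ū(g)` written degreewise,
so that `‖(zu)^{[r]}‖ ≤ Σ_{p+q=r} ‖z^{[p]}‖ ‖u^{[q]}‖`). -/
noncomputable def conv (z u : ℕ → A) : ℕ → A :=
  fun r => ∑ pq ∈ Finset.HasAntidiagonal.antidiagonal r, z pq.1 * u pq.2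

/-- `z ∈ U_a^!(g)`: `[[z]]_a = sup_p ‖z^{[p]}‖ p! a^{−p} < ∞`. -/
def MemUbangAt (a : ℝ) (z : ℕ → A) : Prop :=
  ∃ M : ℝ, ∀ p : ℕ, ‖z p‖ * p.factorial / a ^ p ≤ M

/-- `z ∈ U^!(g) = ∪_{a>0} U_a^!(g)`. -/
def MemUbang (z : ℕ → A) : Prop := ∃ a : ℝ, 0 < a ∧ MemUbangAt a z

open Finset

theorem sum_antidiagonal_pow_div_factorial_mul {K : Type*} [Field K] [CharZero K]
    (a b : K) (r : ℕ) :
    ∑ pq ∈ antidiagonal r, a ^ pq.1 / pq.1.factorial * (b ^ pq.2 / pq.2.factorial) =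
      (a + b) ^ r / r.factorial := by
  rw [(Commute.all a b).add_pow', sum_div]
  refine sum_congr rfl fun pq hpq => ?_
  obtain rfl : pq.1 + pq.2 = r := mem_antidiagonal.mp hpq
  have hfac : ((pq.1 + pq.2).factorial : K) ≠ 0 := Nat.cast_ne_zero.mpr (Nat.factorial_ne_zero _)
  rw [nsmul_eq_mul, Nat.cast_add_choose]
  field_simp

theorem norm_conv_le {z u : ℕ → A} {α β : ℕ → ℝ} {La Lb : ℝ}
    (hz : ∀ p, ‖z p‖ ≤ La * α p) (hu : ∀ q, ‖u q‖ ≤ Lb * β q) (r : ℕ) :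
    ‖conv z u r‖ ≤ La * Lb * ∑ pq ∈ antidiagonal r, α pq.1 * β pq.2 := by
  calc ‖conv z u r‖ ≤ ∑ pq ∈ antidiagonal r, ‖z pq.1‖ * ‖u pq.2‖ :=
        (norm_sum_le _ _).trans (sum_le_sum fun pq _ => norm_mul_le _ _)
    _ ≤ ∑ pq ∈ antidiagonal r, La * α pq.1 * (Lb * β pq.2) :=
        sum_le_sum fun pq _ => mul_le_mul (hz _) (hu _) (norm_nonneg _)
          ((norm_nonneg _).trans (hz _))
    _ = La * Lb * ∑ pq ∈ antidiagonal r, α pq.1 * β pq.2 := by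
        rw [mul_sum]
        exact sum_congr rfl fun pq _ => by ring

theorem norm_le_of_mul_factorial_div_pow_le {a L : ℝ} (ha : 0 < a) {x : A} {p : ℕ}
    (h : ‖x‖ * p.factorial / a ^ p ≤ L) : ‖x‖ ≤ L * (a ^ p / p.factorial) := by
  rw [← mul_div_assoc, le_div_iff₀ (by positivity)]
  exact (div_le_iff₀ (pow_pos ha p)).mp h

theorem norm_conv_mul_factorial_div_pow_le {a b : ℝ} (ha : 0 < a) (hb : 0 < b) {z u : ℕ → A}
    {La Lb : ℝ} (hz : ∀ p : ℕ, ‖z p‖ * p.factorial / a ^ p ≤ La)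
    (hu : ∀ q : ℕ, ‖u q‖ * q.factorial / b ^ q ≤ Lb) (r : ℕ) :
    ‖conv z u r‖ * r.factorial / (a + b) ^ r ≤ La * Lb := by
  have h := norm_conv_le (fun p => norm_le_of_mul_factorial_div_pow_le ha (hz p))
    (fun q => norm_le_of_mul_factorial_div_pow_le hb (hu q)) r
  rw [sum_antidiagonal_pow_div_factorial_mul, ← mul_div_assoc,
    le_div_iff₀ (by positivity)] at h
  rwa [div_le_iff₀ (by positivity)]

theorem MemUbang.conv {z u : ℕ → A} : MemUbang z → MemUbang u → MemUbang (conv z u)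
  | ⟨a, ha, La, hz⟩, ⟨b, hb, Lb, hu⟩ =>
    ⟨a + b, add_pos ha hb, La * Lb, norm_conv_mul_factorial_div_pow_le ha hb hz hu⟩

/-- If `z ∈ U_a^!(g)` and `u ∈ U_b^!(g)`, then `zu ∈ U_{a+b}^!(g)` with
`[[zu]]_{a+b} ≤ [[z]]_a · [[u]]_b`: any bounds `La ≥ [[z]]_a`, `Lb ≥ [[u]]_b` give the bound
`La · Lb` for `[[zu]]_{a+b}`.  Consequently `U^!(g) = ∪_a U_a^!(g)` is closed under
multiplication (it is an algebra). -/
theorem Ubang_mul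
    (a b : ℝ) (ha : 0 < a) (hb : 0 < b) (z u : ℕ → A) (La Lb : ℝ)
    (hz : ∀ p : ℕ, ‖z p‖ * p.factorial / a ^ p ≤ La)
    (hu : ∀ q : ℕ, ‖u q‖ * q.factorial / b ^ q ≤ Lb) :
    (∀ r : ℕ, ‖conv z u r‖ * r.factorial / (a + b) ^ r ≤ La * Lb) ∧
    (∀ z' u' : ℕ → A, MemUbang z' → MemUbang u' → MemUbang (conv z' u')) :=
  ⟨norm_conv_mul_factorial_div_pow_le ha hb hz hu, fun _ _ => MemUbang.conv⟩

end Stmt16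
end
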